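/- Let (X_t) be a random process over the reals, let x_min > 0, and let T = inf{t : X_t < x_min}. Let D be the smallest real interval containing all values x ≥ x_min that X_t can take for t ≤ T. Suppose (a) X_0 ≥ x_min and X_t ≥ 0 for all t ≤ T, and (b) there is a monotonically increasing function h : D → ℝ_{>0} such that X_t − E[X_{t+1} | X_0,…,X_t] ≥ h(X_t) for all t < T. Then E[T | X_0] ≤ x_min/h(x_min) + ∫_{x_min}^{X_0} dz/h(z). -/

import Mathlib

/-!
Let `k` be the running infimum of `1 / h` over `D ∩ [xmin, z]`: an antitone extension of `1 / h`
to all of `ℝ`, bounded by `1 / h xmin`. Its primitive `g x = xmin / h xmin + ∫_{xmin}^x k` is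
concave with supergradient `k`, so before `T` the drift condition gives
`E[g(X_{t+1}) | X_0, …, X_t] ≤ g(X_t) + k(X_t) (E[X_{t+1} | …] - X_t) ≤ g(X_t) - 1`.
Hence `g(X_{t ∧ T}) + t ∧ T` is a supermartingale, and since `g ≥ 0` on `[0, ∞)` this bounds
`E[t ∧ T | X_0]` by `g(X_0)`. Monotone convergence passes to `E[T | X_0]`, and `g(X_0)` is the
stated expression because `[xmin, X_0] ⊆ D`, where `k = 1 / h`.
-/

open MeasureTheory ProbabilityTheory Filter
open scoped ENNReal NNReal

/-- The natural filtration of the process `X` up to time `t`: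
the σ-algebra generated by `X 0, …, X t`. -/
noncomputable def natSigma {Ω : Type*} [MeasurableSpace Ω] (X : ℕ → Ω → ℝ) (t : ℕ) :
    MeasurableSpace Ω :=
  ⨆ s ∈ Finset.range (t + 1), MeasurableSpace.comap (X s) inferInstance

open Set

section RunningInf
variable {φ : ℝ → ℝ} {S : Set ℝ} {a z : ℝ}

/-- `φ a` is included so that the infimum is never taken over `∅` (where `sInf` is `0`):
below `a` the value is `φ a`. -/
noncomputable def runningInf (φ : ℝ → ℝ) (S : Set ℝ) (a z : ℝ) : ℝ :=
  sInf (insert (φ a) (φ '' (S ∩ Icc a z)))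

lemma nonneg_of_mem_runningInf_set (hφ : ∀ x ∈ S, 0 ≤ φ x) (ha : a ∈ S) {w : ℝ}
    (hw : w ∈ insert (φ a) (φ '' (S ∩ Icc a z))) : 0 ≤ w := by
  rcases hw with rfl | ⟨x, ⟨hx, -⟩, rfl⟩
  exacts [hφ a ha, hφ x hx]

lemma bddBelow_runningInf_set (hφ : ∀ x ∈ S, 0 ≤ φ x) (ha : a ∈ S) (z : ℝ) :
    BddBelow (insert (φ a) (φ '' (S ∩ Icc a z))) :=
  ⟨0, fun _ => nonneg_of_mem_runningInf_set hφ ha⟩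

lemma runningInf_nonneg (hφ : ∀ x ∈ S, 0 ≤ φ x) (ha : a ∈ S) (z : ℝ) :
    0 ≤ runningInf φ S a z :=
  le_csInf (insert_nonempty _ _) fun _ => nonneg_of_mem_runningInf_set hφ ha

lemma runningInf_le (hφ : ∀ x ∈ S, 0 ≤ φ x) (ha : a ∈ S) (z : ℝ) : runningInf φ S a z ≤ φ a :=
  csInf_le (bddBelow_runningInf_set hφ ha z) (mem_insert _ _)

lemma norm_runningInf_le (hφ : ∀ x ∈ S, 0 ≤ φ x) (ha : a ∈ S) (z : ℝ) :
    ‖runningInf φ S a z‖ ≤ φ a := by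
  rw [Real.norm_of_nonneg (runningInf_nonneg hφ ha z)]
  exact runningInf_le hφ ha z

lemma antitone_runningInf (hφ : ∀ x ∈ S, 0 ≤ φ x) (ha : a ∈ S) : Antitone (runningInf φ S a) :=
  fun _ z₂ hz => csInf_le_csInf (bddBelow_runningInf_set hφ ha z₂) (insert_nonempty _ _)
    (insert_subset_insert (image_mono (inter_subset_inter_right _ (Icc_subset_Icc_right hz))))

lemma runningInf_eq_of_mem (hφ : AntitoneOn φ S) (hφ0 : ∀ x ∈ S, 0 ≤ φ x) (ha : a ∈ S)
    (hz : z ∈ S) (haz : a ≤ z) : runningInf φ S a z = φ z := by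
  refine le_antisymm (csInf_le (bddBelow_runningInf_set hφ0 ha z)
    (mem_insert_of_mem _ ⟨z, ⟨hz, haz, le_rfl⟩, rfl⟩)) (le_csInf (insert_nonempty _ _) ?_)
  rintro _ (rfl | ⟨x, ⟨hx, -, hxz⟩, rfl⟩)
  exacts [hφ ha hz haz, hφ hx hz hxz]

end RunningInf

lemma Antitone.intervalIntegral_le_mul_sub {k : ℝ → ℝ} (hk : Antitone k) (x y : ℝ) :
    ∫ z in x..y, k z ≤ k x * (y - x) := by
  rcases le_total x y with hxy | hyx
  · calc ∫ z in x..y, k z ≤ ∫ _ in x..y, k x :=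
          intervalIntegral.integral_mono_on hxy hk.intervalIntegrable intervalIntegrable_const
            fun z hz => hk hz.1
      _ = k x * (y - x) := by simp [mul_comm]
  · have : k x * (x - y) ≤ ∫ z in y..x, k z :=
      calc k x * (x - y) = ∫ _ in y..x, k x := by simp [mul_comm]
        _ ≤ ∫ z in y..x, k z :=
          intervalIntegral.integral_mono_on hyx intervalIntegrable_const hk.intervalIntegrable
            fun z hz => hk hz.2
    rw [intervalIntegral.integral_symm]
    linarith

lemma lipschitzWith_intervalIntegral {k : ℝ → ℝ} {C : ℝ≥0}
    (hk : ∀ x y, IntervalIntegrable k volume x y) (hC : ∀ z, ‖k z‖ ≤ C) (a : ℝ) :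
    LipschitzWith C fun x => ∫ z in a..x, k z := by
  refine LipschitzWith.of_dist_le_mul fun x y => ?_
  rw [dist_eq_norm, intervalIntegral.integral_interval_sub_left (hk a x) (hk a y), Real.dist_eq]
  exact intervalIntegral.norm_integral_le_of_norm_le_const fun z _ => hC z

section ConditionalExpectation
variable {Ω : Type*} {m m0 : MeasurableSpace Ω} {μ : Measure Ω} [IsFiniteMeasure μ]

lemma LipschitzWith.integrable_comp {K : ℝ≥0} {g : ℝ → ℝ} (hg : LipschitzWith K g)
    {f : Ω → ℝ} (hf : Integrable f μ) : Integrable (fun ω => g (f ω)) μ := by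
  refine ((integrable_const |g 0|).add (hf.abs.const_mul K)).mono'
    (hg.continuous.comp_aestronglyMeasurable hf.1) (ae_of_all _ fun ω => ?_)
  have := hg.dist_le_mul (f ω) 0
  rw [Real.dist_eq, Real.dist_eq, sub_zero] at this
  simp only [Real.norm_eq_abs, Pi.add_apply]
  linarith [abs_sub_abs_le_abs_sub (g (f ω)) (g 0)]

lemma condExp_comp_le_of_le_add_mul (hm : m ≤ m0) {φ k : ℝ → ℝ} {K : ℝ≥0} {C : ℝ}
    (hφ : LipschitzWith K φ) (htan : ∀ x y, φ y ≤ φ x + k x * (y - x)) (hk : Measurable k)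
    (hkC : ∀ x, ‖k x‖ ≤ C) {U V : Ω → ℝ} (hU : StronglyMeasurable[m] U) (hUi : Integrable U μ)
    (hVi : Integrable V μ) :
    μ[fun ω => φ (V ω) | m] ≤ᵐ[μ] fun ω => φ (U ω) + k (U ω) * (μ[V | m] ω - U ω) := by
  have hφU : StronglyMeasurable[m] fun ω => φ (U ω) := hφ.continuous.comp_stronglyMeasurable hU
  have hkU : StronglyMeasurable[m] fun ω => k (U ω) := (hk.comp hU.measurable).stronglyMeasurable
  have hprod : Integrable ((fun ω => k (U ω)) * (V - U)) μ :=
    (hVi.sub hUi).bdd_mul (hkU.mono hm).aestronglyMeasurable (ae_of_all _ fun ω => hkC _)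
  have hφUi := hφ.integrable_comp hUi
  have hcond : μ[(fun ω => φ (U ω)) + (fun ω => k (U ω)) * (V - U) | m] =ᵐ[μ]
      fun ω => φ (U ω) + k (U ω) * (μ[V | m] ω - U ω) := by
    filter_upwards [condExp_add hφUi hprod m,
      condExp_mul_of_stronglyMeasurable_left hkU hprod (hVi.sub hUi), condExp_sub hVi hUi m]
      with ω hadd hmul hsub
    rw [hadd, Pi.add_apply, hmul, Pi.mul_apply, hsub, condExp_of_stronglyMeasurable hm hφU hφUi,
      condExp_of_stronglyMeasurable hm hU hUi, Pi.sub_apply]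
  exact (condExp_mono (hφ.integrable_comp hVi) (hφUi.add hprod)
    (ae_of_all _ fun ω => htan (U ω) (V ω))).trans hcond.le

end ConditionalExpectation

section TruncatedTime

lemma natCast_untopA_min (n : ℕ) (a : ℕ∞) :
    (((min (n : ℕ∞) a).untopA : ℕ) : ℕ∞) = min (n : ℕ∞) a := by
  rcases le_total (n : ℕ∞) a with h | h
  · rw [min_eq_left h]; rfl
  · rw [min_eq_right h]
    lift a to ℕ using ne_top_of_le_ne_top (ENat.natCast_ne_top n) h
    rfl

lemma untopA_min_le (n : ℕ) (a : ℕ∞) : (min (n : ℕ∞) a).untopA ≤ n := by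
  exact_mod_cast (natCast_untopA_min n a).trans_le (min_le_left _ _)

lemma monotone_untopA_min (a : ℕ∞) : Monotone fun n : ℕ => (min (n : ℕ∞) a).untopA := by
  intro n k hnk
  have : min (n : ℕ∞) a ≤ min (k : ℕ∞) a := min_le_min_right _ (by exact_mod_cast hnk)
  rw [← natCast_untopA_min n, ← natCast_untopA_min k] at this
  exact_mod_cast this

lemma iSup_natCast_untopA_min (a : ℕ∞) :
    ⨆ n : ℕ, (((min (n : ℕ∞) a).untopA : ℕ) : ℝ≥0∞) = a := by
  simp_rw [← ENat.toENNReal_coe, natCast_untopA_min, ← ENat.toENNReal_iSup, ← iSup_inf_eq,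
    ENat.iSup_natCast, top_inf_eq]

end TruncatedTime

section StoppedProcess
variable {Ω : Type*} {m0 : MeasurableSpace Ω} {μ : Measure Ω}

lemma MeasureTheory.IsStoppingTime.measurable_enat {ℱ : Filtration ℕ m0} {τ : Ω → ℕ∞}
    (hτ : IsStoppingTime ℱ τ) : Measurable τ := by
  refine measurable_to_countable' fun x => ?_
  induction x using ENat.recTopCoe with
  | top => exact hτ.measurableSet_eq_top
  | coe n => exact ℱ.le n _ (hτ.measurableSet_eq n)

lemma stoppedProcess_add_one_eq {β : Type*} [AddCommGroup β] (u : ℕ → Ω → β) (τ : Ω → ℕ∞)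
    (n : ℕ) : stoppedProcess u τ (n + 1) =
      stoppedProcess u τ n + {ω | (n : ℕ∞) < τ ω}.indicator (u (n + 1) - u n) := by
  ext ω
  by_cases hn : (n : ℕ∞) < τ ω
  · have hn' : ((n + 1 : ℕ) : ℕ∞) ≤ τ ω := Order.add_one_le_of_lt hn
    simp [stoppedProcess_eq_of_le hn', stoppedProcess_eq_of_le hn.le, hn]
  · have hn' : τ ω ≤ n := not_lt.mp hn
    have hn'' : τ ω ≤ ((n + 1 : ℕ) : ℕ∞) := hn'.trans (by exact_mod_cast n.le_succ)
    simp [stoppedProcess_eq_of_ge hn', stoppedProcess_eq_of_ge hn'', hn]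

variable [IsFiniteMeasure μ] {ℱ : Filtration ℕ m0} {τ : Ω → ℕ∞}

lemma supermartingale_stoppedProcess_of_condExp_le {Y : ℕ → Ω → ℝ} (hY : StronglyAdapted ℱ Y)
    (hYi : ∀ n, Integrable (Y n) μ) (hτ : IsStoppingTime ℱ τ)
    (hstep : ∀ n : ℕ, ∀ᵐ ω ∂μ, (n : ℕ∞) < τ ω → μ[Y (n + 1) | ℱ n] ω ≤ Y n ω) :
    Supermartingale (stoppedProcess Y τ) ℱ μ := by
  have hZ := hY.stoppedProcess_of_discrete hτ
  have hZi := integrable_stoppedProcess hτ hYi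
  refine supermartingale_nat hZ hZi fun n => ?_
  set A := {ω | (n : ℕ∞) < τ ω}
  have hA : MeasurableSet[ℱ n] A := hτ.measurableSet_gt n
  have hincr_i : Integrable (Y (n + 1) - Y n) μ := (hYi _).sub (hYi n)
  have hincr : μ[A.indicator (Y (n + 1) - Y n) | ℱ n] =ᵐ[μ]
      A.indicator (μ[Y (n + 1) | ℱ n] - Y n) := by
    refine (condExp_indicator hincr_i hA).trans (EventuallyEq.indicator ?_)
    refine (condExp_sub (hYi (n + 1)) (hYi n) (ℱ n)).trans ?_
    rw [condExp_of_stronglyMeasurable (ℱ.le n) (hY n) (hYi n)]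
  rw [stoppedProcess_add_one_eq]
  filter_upwards [condExp_add (hZi n) (hincr_i.indicator (ℱ.le n _ hA)) (ℱ n),
    hincr, hstep n] with ω hadd hind hstepω
  rw [hadd, Pi.add_apply, condExp_of_stronglyMeasurable (ℱ.le n) (hZ n) (hZi n), hind]
  by_cases hn : ω ∈ A
  · simpa [hn] using hstepω hn
  · simp [hn]

lemma condExp_min_le_of_supermartingale_stoppedProcess {V : ℕ → Ω → ℝ}
    (hτ : IsStoppingTime ℱ τ) (hsup : Supermartingale (stoppedProcess (fun n ω => V n ω + n) τ) ℱ μ)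
    (hV : ∀ n, 0 ≤ᵐ[μ] stoppedProcess V τ n) (n : ℕ) :
    μ[fun ω => ((min (n : ℕ∞) (τ ω)).untopA : ℝ) | ℱ 0] ≤ᵐ[μ] V 0 := by
  have hint : Integrable (fun ω => ((min (n : ℕ∞) (τ ω)).untopA : ℝ)) μ :=
    integrable_stoppedProcess (u := fun (n : ℕ) (_ : Ω) => (n : ℝ)) hτ
      (fun _ => integrable_const _) n
  calc μ[fun ω => ((min (n : ℕ∞) (τ ω)).untopA : ℝ) | ℱ 0]
      ≤ᵐ[μ] μ[stoppedProcess (fun n ω => V n ω + n) τ n | ℱ 0] := by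
        refine condExp_mono hint (hsup.integrable n) ?_
        filter_upwards [hV n] with ω hω
        exact le_add_of_nonneg_left hω
    _ ≤ᵐ[μ] stoppedProcess (fun n ω => V n ω + n) τ 0 := hsup.condExp_ae_le n.zero_le
    _ = V 0 := by
        ext ω
        simp [stoppedProcess_eq_of_le (show ((0 : ℕ) : ℕ∞) ≤ τ ω from bot_le)]

end StoppedProcess

lemma ae_lintegral_condExpKernel_le_of_condExp_min_le {Ω : Type*} {m : MeasurableSpace Ω}
    [mΩ : MeasurableSpace Ω] [StandardBorelSpace Ω] {μ : Measure Ω} [IsFiniteMeasure μ]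
    (hm : m ≤ mΩ) {τ : Ω → ℕ∞} (hτ : Measurable τ) {B : Ω → ℝ}
    (hB : ∀ n : ℕ, μ[fun ω => ((min (n : ℕ∞) (τ ω)).untopA : ℝ) | m] ≤ᵐ[μ] B) :
    ∀ᵐ ω ∂μ, ∫⁻ ω', (τ ω' : ℝ≥0∞) ∂(condExpKernel μ m ω) ≤ ENNReal.ofReal (B ω) := by
  set f : ℕ → Ω → ℝ := fun n ω => ((min (n : ℕ∞) (τ ω)).untopA : ℝ)
  have hf_meas (n : ℕ) : Measurable (f n) :=
    (measurable_of_countable fun a : ℕ∞ => ((min (n : ℕ∞) a).untopA : ℝ)).comp hτ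
  have hf_int (n : ℕ) (ν : Measure Ω) [IsFiniteMeasure ν] : Integrable (f n) ν :=
    .of_bound (hf_meas n).aestronglyMeasurable n (ae_of_all _ fun ω => by
      simpa [f] using untopA_min_le n (τ ω))
  have hkernel (n : ℕ) : ∀ᵐ ω ∂μ, ∫ ω', f n ω' ∂(condExpKernel μ m ω) ≤ B ω := by
    filter_upwards [condExp_ae_eq_integral_condExpKernel hm (hf_int n μ), hB n] with ω heq hle
    exact heq ▸ hle
  filter_upwards [ae_all_iff.2 hkernel] with ω hω
  calc ∫⁻ ω', (τ ω' : ℝ≥0∞) ∂(condExpKernel μ m ω)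
      = ∫⁻ ω', ⨆ n, ENNReal.ofReal (f n ω') ∂(condExpKernel μ m ω) := by
        simp_rw [f, ENNReal.ofReal_natCast, iSup_natCast_untopA_min]
    _ = ⨆ n, ENNReal.ofReal (∫ ω', f n ω' ∂(condExpKernel μ m ω)) := by
        rw [lintegral_iSup (fun n => (hf_meas n).ennreal_ofReal) fun n k hnk ω' =>
          ENNReal.ofReal_le_ofReal (Nat.cast_le.2 (monotone_untopA_min (τ ω') hnk))]
        refine iSup_congr fun n => (ofReal_integral_eq_lintegral_ofReal (hf_int n _)
          (ae_of_all _ fun ω' => Nat.cast_nonneg _)).symm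
    _ ≤ ENNReal.ofReal (B ω) := iSup_le fun n => ENNReal.ofReal_le_ofReal (hω n)

section DriftPotential
variable {h : ℝ → ℝ} {D : Set ℝ} {xmin : ℝ}

noncomputable def driftPotential (h : ℝ → ℝ) (D : Set ℝ) (xmin x : ℝ) : ℝ :=
  xmin / h xmin + ∫ z in xmin..x, runningInf (fun y => (h y)⁻¹) D xmin z

lemma inv_nonneg_of_forall_pos (hpos : ∀ x ∈ D, 0 < h x) : ∀ x ∈ D, 0 ≤ (h x)⁻¹ :=
  fun x hx => (inv_pos.2 (hpos x hx)).le

lemma MonotoneOn.antitoneOn_inv (hmono : MonotoneOn h D) (hpos : ∀ x ∈ D, 0 < h x) :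
    AntitoneOn (fun y => (h y)⁻¹) D :=
  fun _ ha _ hb hab => inv_anti₀ (hpos _ ha) (hmono ha hb hab)

lemma driftPotential_le_add_mul (hpos : ∀ x ∈ D, 0 < h x) (hxminD : xmin ∈ D) (x y : ℝ) :
    driftPotential h D xmin y ≤
      driftPotential h D xmin x + runningInf (fun y => (h y)⁻¹) D xmin x * (y - x) := by
  have hk := antitone_runningInf (inv_nonneg_of_forall_pos hpos) hxminD
  have := hk.intervalIntegral_le_mul_sub x y
  rw [← intervalIntegral.integral_interval_sub_left (a := xmin) hk.intervalIntegrable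
    hk.intervalIntegrable] at this
  simp only [driftPotential]
  linarith

lemma lipschitzWith_driftPotential (hpos : ∀ x ∈ D, 0 < h x) (hxminD : xmin ∈ D) :
    LipschitzWith (Real.toNNReal (h xmin)⁻¹) (driftPotential h D xmin) := by
  have hφ := inv_nonneg_of_forall_pos hpos
  have := (LipschitzWith.const (xmin / h xmin)).add
    (lipschitzWith_intervalIntegral (fun _ _ => (antitone_runningInf hφ hxminD).intervalIntegrable)
      (fun z => (norm_runningInf_le hφ hxminD z).trans (Real.le_coe_toNNReal _)) xmin)
  rwa [zero_add] at this

lemma driftPotential_nonneg (hpos : ∀ x ∈ D, 0 < h x) (hxminD : xmin ∈ D) (hxmin : 0 ≤ xmin)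
    {x : ℝ} (hx : 0 ≤ x) : 0 ≤ driftPotential h D xmin x := by
  have hφ := inv_nonneg_of_forall_pos hpos
  have htan := driftPotential_le_add_mul hpos hxminD x xmin
  have h0 := runningInf_nonneg hφ hxminD x
  have h1 := runningInf_le hφ hxminD x
  have hxmin' : driftPotential h D xmin xmin = xmin * (h xmin)⁻¹ := by
    simp [driftPotential, div_eq_mul_inv]
  rw [hxmin'] at htan
  rcases le_total x xmin with hle | hle
  · nlinarith [mul_le_mul_of_nonneg_left h1 (sub_nonneg.2 hle)]
  · nlinarith [mul_nonneg h0 (sub_nonneg.2 hle)]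

lemma driftPotential_eq (hmono : MonotoneOn h D) (hpos : ∀ x ∈ D, 0 < h x) (hD : D.OrdConnected)
    (hxminD : xmin ∈ D) {x : ℝ} (hx : x ∈ D) (hxx : xmin ≤ x) :
    driftPotential h D xmin x = xmin / h xmin + ∫ z in xmin..x, 1 / h z := by
  refine congrArg _ (intervalIntegral.integral_congr fun z hz => ?_)
  rw [uIcc_of_le hxx] at hz
  rw [runningInf_eq_of_mem (hmono.antitoneOn_inv hpos) (inv_nonneg_of_forall_pos hpos)
    hxminD (hD.out hxminD hx hz) hz.1, one_div]

variable {Ω : Type*} {m0 : MeasurableSpace Ω} {μ : Measure Ω} [IsFiniteMeasure μ]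

lemma condExp_driftPotential_le_sub_one {m : MeasurableSpace Ω} (hm : m ≤ m0)
    (hmono : MonotoneOn h D) (hpos : ∀ x ∈ D, 0 < h x) (hxminD : xmin ∈ D) {U V : Ω → ℝ}
    (hU : StronglyMeasurable[m] U) (hUi : Integrable U μ) (hVi : Integrable V μ) :
    ∀ᵐ ω ∂μ, U ω ∈ D → xmin ≤ U ω → h (U ω) ≤ U ω - μ[V | m] ω →
      μ[fun ω => driftPotential h D xmin (V ω) | m] ω ≤ driftPotential h D xmin (U ω) - 1 := by
  have hφ := inv_nonneg_of_forall_pos hpos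
  filter_upwards [condExp_comp_le_of_le_add_mul hm (lipschitzWith_driftPotential hpos hxminD)
    (driftPotential_le_add_mul hpos hxminD) (antitone_runningInf hφ hxminD).measurable
    (norm_runningInf_le hφ hxminD) hU hUi hVi] with ω hω hUD hxU hdrift
  rw [runningInf_eq_of_mem (hmono.antitoneOn_inv hpos) hφ hxminD hUD hxU] at hω
  have hhU := hpos _ hUD
  calc μ[fun ω => driftPotential h D xmin (V ω) | m] ω
      ≤ driftPotential h D xmin (U ω) + (h (U ω))⁻¹ * (μ[V | m] ω - U ω) := hω
    _ ≤ driftPotential h D xmin (U ω) + (h (U ω))⁻¹ * -h (U ω) := by gcongr; linarith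
    _ = driftPotential h D xmin (U ω) - 1 := by field_simp; ring

lemma supermartingale_stoppedProcess_driftPotential {ℱ : Filtration ℕ m0} {X : ℕ → Ω → ℝ}
    (hX : StronglyAdapted ℱ X) (hXi : ∀ n, Integrable (X n) μ) {τ : Ω → ℕ∞}
    (hτ : IsStoppingTime ℱ τ) (hmono : MonotoneOn h D) (hpos : ∀ x ∈ D, 0 < h x)
    (hxminD : xmin ∈ D) (hbefore : ∀ (n : ℕ) ω, (n : ℕ∞) < τ ω → X n ω ∈ D ∧ xmin ≤ X n ω)
    (hdrift : ∀ n : ℕ, ∀ᵐ ω ∂μ, (n : ℕ∞) < τ ω → h (X n ω) ≤ X n ω - μ[X (n + 1) | ℱ n] ω) :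
    Supermartingale (stoppedProcess (fun n ω => driftPotential h D xmin (X n ω) + n) τ) ℱ μ := by
  have hg := lipschitzWith_driftPotential hpos hxminD
  refine supermartingale_stoppedProcess_of_condExp_le
    (fun n => (hg.continuous.comp_stronglyMeasurable (hX n)).add stronglyMeasurable_const)
    (fun n => (hg.integrable_comp (hXi n)).add (integrable_const _)) hτ fun n => ?_
  filter_upwards [condExp_driftPotential_le_sub_one (ℱ.le n) hmono hpos hxminD (hX n) (hXi n)
      (hXi (n + 1)), hdrift n,
    condExp_add (hg.integrable_comp (hXi (n + 1))) (integrable_const ((n + 1 : ℕ) : ℝ)) (ℱ n)]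
    with ω hstep hdriftω hadd hn
  obtain ⟨hD, hx⟩ := hbefore n ω hn
  change μ[(fun ω => driftPotential h D xmin (X (n + 1) ω)) + fun _ => ((n + 1 : ℕ) : ℝ) | ℱ n] ω
    ≤ _
  rw [hadd, Pi.add_apply, condExp_const (ℱ.le n)]
  have := hstep hD hx (hdriftω hn)
  push_cast at this ⊢
  linarith

end DriftPotential

lemma sInf_natCast_image_eq_hittingAfter {Ω β : Type*} (u : ℕ → Ω → β) (s : Set β) (ω : Ω) :
    sInf ((fun n : ℕ => (n : ℕ∞)) '' {t | u t ω ∈ s}) = hittingAfter u s 0 ω := by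
  simp only [hittingAfter, zero_le, true_and]
  split_ifs with h
  · obtain ⟨j, -, hj⟩ := h
    exact sInf_image.trans (ENat.natCast_sInf ⟨j, hj⟩).symm
  · simp_all; rfl

lemma isStoppingTime_of_eq_sInf_natCast_image {Ω β : Type*} {m0 : MeasurableSpace Ω}
    [MeasurableSpace β] {ℱ : Filtration ℕ m0} {u : ℕ → Ω → β} (hu : Adapted ℱ u) {s : Set β}
    (hs : MeasurableSet s) {τ : Ω → ℕ∞}
    (hτ : ∀ ω, τ ω = sInf ((fun n : ℕ => (n : ℕ∞)) '' {t | u t ω ∈ s})) :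
    IsStoppingTime ℱ τ := by
  rw [show τ = hittingAfter u s 0 from
    funext fun ω => (hτ ω).trans (sInf_natCast_image_eq_hittingAfter u s ω)]
  exact hu.isStoppingTime_hittingAfter hs

section NaturalFiltration
variable {Ω : Type*} [MeasurableSpace Ω]

lemma natSigma_eq_natural {X : ℕ → Ω → ℝ} (hX : ∀ t, StronglyMeasurable (X t)) (t : ℕ) :
    natSigma X t = Filtration.natural X hX t := by
  simp [natSigma, Filtration.natural]

lemma natSigma_zero (X : ℕ → Ω → ℝ) :
    natSigma X 0 = MeasurableSpace.comap (X 0) inferInstance := by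
  simp [natSigma]

end NaturalFiltration

/-- **Upper Variable Drift, Unbounded, Below Target.** -/
theorem upper_variable_drift_unbounded_below_target
    {Ω : Type*} [MeasurableSpace Ω] [StandardBorelSpace Ω]
    (μ : Measure Ω) [IsProbabilityMeasure μ]
    (X : ℕ → Ω → ℝ) (hXmeas : ∀ t, Measurable (X t)) (hXint : ∀ t, Integrable (X t) μ)
    (xmin : ℝ) (hxmin : 0 < xmin)
    (T : Ω → ℕ∞)
    (hT : ∀ ω, T ω = sInf ((fun n : ℕ => (n : ℕ∞)) '' {t : ℕ | X t ω < xmin}))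
    -- `D` is a real interval containing `xmin` and all values `x ≥ xmin` the process
    -- can take up to time `T`
    (D : Set ℝ) (hDconn : D.OrdConnected) (hxminD : xmin ∈ D)
    (hDmem : ∀ t : ℕ, ∀ ω, (t : ℕ∞) ≤ T ω → xmin ≤ X t ω → X t ω ∈ D)
    (h : ℝ → ℝ) (hmono : MonotoneOn h D) (hpos : ∀ x ∈ D, 0 < h x)
    (hstart : ∀ᵐ ω ∂μ, xmin ≤ X 0 ω)
    (hnonneg : ∀ t : ℕ, ∀ᵐ ω ∂μ, (t : ℕ∞) ≤ T ω → 0 ≤ X t ω)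
    (hdrift : ∀ t : ℕ, ∀ᵐ ω ∂μ, (t : ℕ∞) < T ω →
      h (X t ω) ≤ X t ω - (μ[X (t + 1) | natSigma X t]) ω) :
    ∀ᵐ ω ∂μ,
      (∫⁻ ω', (T ω' : ℝ≥0∞) ∂(condExpKernel μ (MeasurableSpace.comap (X 0) inferInstance) ω))
        ≤ ENNReal.ofReal (xmin / h xmin + ∫ z in xmin..(X 0 ω), 1 / h z) := by
  set ℱ := Filtration.natural X fun t => (hXmeas t).stronglyMeasurable
  have hℱ (t : ℕ) : natSigma X t = ℱ t := natSigma_eq_natural _ t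
  have hXℱ : StronglyAdapted ℱ X := Filtration.stronglyAdapted_natural _
  have hTℱ : IsStoppingTime ℱ T :=
    isStoppingTime_of_eq_sInf_natCast_image hXℱ.adapted measurableSet_Iio hT
  have hbefore (n : ℕ) (ω : Ω) (hn : (n : ℕ∞) < T ω) : X n ω ∈ D ∧ xmin ≤ X n ω := by
    have hx : xmin ≤ X n ω := not_lt.1 fun hlt => hn.not_ge ((hT ω).symm ▸ sInf_le ⟨n, hlt, rfl⟩)
    exact ⟨hDmem n ω hn.le hx, hx⟩
  have hsup := supermartingale_stoppedProcess_driftPotential hXℱ hXint hTℱ hmono hpos hxminD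
    hbefore (by simpa only [hℱ] using hdrift)
  have hbound := condExp_min_le_of_supermartingale_stoppedProcess hTℱ hsup fun n => by
    filter_upwards [ae_all_iff.2 hnonneg] with ω hω
    exact driftPotential_nonneg hpos hxminD hxmin.le
      (hω _ ((natCast_untopA_min n (T ω)).trans_le (min_le_right _ _)))
  have hℱ0 : ℱ 0 = MeasurableSpace.comap (X 0) inferInstance := by
    rw [← hℱ, natSigma_zero]
  rw [hℱ0] at hbound
  filter_upwards [ae_lintegral_condExpKernel_le_of_condExp_min_le (hℱ0 ▸ ℱ.le 0)
    hTℱ.measurable_enat hbound, hstart] with ω hω hs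
  rwa [driftPotential_eq hmono hpos hDconn hxminD (hDmem 0 ω bot_le hs) hs] at hω
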